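/- For all y ∈ ℝ, the identity ρ'(y) · ∫₀^y ρ(z)² dz = (2/3)ρ(y)³ + ρ(y)² − 3ρ(y) holds. -/

import Mathlib

/-!
In the variable `t = tanh (y/2)`, which satisfies `dt/dy = (1 - t²)/2`, one has
`ρ = (3/2)(1 - t²)`, `ρ' = -(3/2) t (1 - t²)` and `∫₀^y ρ² = (9/2) t - (3/2) t³`.
Both sides of the identity are then the same polynomial in `t`.
-/

open Real

/-- The spike profile `ρ(y) = (3/2) sech²(y/2)`. -/
noncomputable def rho (y : ℝ) : ℝ := (3/2) * (1 / Real.cosh (y/2))^2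

namespace Real

theorem one_sub_tanh_sq (x : ℝ) : 1 - tanh x ^ 2 = (1 / cosh x) ^ 2 := by
  have hc := (cosh_pos x).ne'
  rw [tanh_eq_sinh_div_cosh]
  field_simp
  linear_combination cosh_sq_sub_sinh_sq x

theorem hasDerivAt_tanh (x : ℝ) : HasDerivAt tanh (1 - tanh x ^ 2) x := by
  have h := (hasDerivAt_sinh x).div (hasDerivAt_cosh x) (cosh_pos x).ne'
  rw [show sinh / cosh = tanh from funext fun y => (tanh_eq_sinh_div_cosh y).symm] at h
  refine h.congr_deriv ?_
  rw [one_sub_tanh_sq, div_pow, one_pow, ← cosh_sq_sub_sinh_sq x]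
  ring

end Real

theorem rho_eq_tanh (y : ℝ) : rho y = 3 / 2 * (1 - tanh (y / 2) ^ 2) := by
  rw [rho, one_sub_tanh_sq]

theorem hasDerivAt_tanh_half (y : ℝ) :
    HasDerivAt (fun x => tanh (x / 2)) ((1 - tanh (y / 2) ^ 2) / 2) y := by
  have h := (hasDerivAt_tanh (y / 2)).comp y ((hasDerivAt_id' y).div_const 2)
  exact h.congr_deriv (by ring)

theorem hasDerivAt_rho (y : ℝ) :
    HasDerivAt rho (-(3 / 2) * tanh (y / 2) * (1 - tanh (y / 2) ^ 2)) y := by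
  rw [funext rho_eq_tanh]
  exact ((((hasDerivAt_tanh_half y).fun_pow 2).const_sub 1).const_mul (3 / 2 : ℝ)).congr_deriv
    (by ring)

theorem continuous_rho : Continuous rho :=
  continuous_iff_continuousAt.2 fun y => (hasDerivAt_rho y).continuousAt

theorem integral_rho_sq (y : ℝ) :
    ∫ z in (0 : ℝ)..y, rho z ^ 2 = 9 / 2 * tanh (y / 2) - 3 / 2 * tanh (y / 2) ^ 3 := by
  have hF (x : ℝ) : HasDerivAt (fun z => 9 / 2 * tanh (z / 2) - 3 / 2 * tanh (z / 2) ^ 3)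
      (rho x ^ 2) x := by
    refine (((hasDerivAt_tanh_half x).const_mul (9 / 2 : ℝ)).fun_sub
      (((hasDerivAt_tanh_half x).fun_pow 3).const_mul (3 / 2 : ℝ))).congr_deriv ?_
    rw [rho_eq_tanh]
    ring
  rw [intervalIntegral.integral_eq_sub_of_hasDerivAt (fun x _ => hF x)
    ((continuous_rho.pow 2).intervalIntegrable 0 y)]
  simp

/-- The identity `ρ'(y) ∫₀^y ρ² = (2/3)ρ³ + ρ² − 3ρ` for all `y`. -/
theorem stmt_15 :
    ∀ y : ℝ, deriv rho y * (∫ z in (0 : ℝ)..y, (rho z)^2)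
      = (2/3) * (rho y)^3 + (rho y)^2 - 3 * rho y := by
  intro y
  rw [(hasDerivAt_rho y).deriv, integral_rho_sq, rho_eq_tanh]
  ring
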